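/- Let X, Y be independent random variables with distribution functions F, G such that ‖F*G − Φ‖ ≤ ε, with ε sufficiently small (ε < min{1/4 − Φ(−1), exp(−1/(3−2√2))}), and such that |m(X)| ≤ 2 for some median m(X) of X. Set N = 1 + √(2 log(1/ε)). Then P(|Y| ≥ N) ≤ 6√ε. -/

import Mathlib

/-!
Compare `Y` with a median `m` of `X`: independence gives
`P(X ≥ m) P(Y ≥ N) ≤ P(X + Y ≥ m + N)`, and `P(X ≥ m) ≥ 1/2`, so `P(Y ≥ N)` is at most twice an
upper tail of `X + Y`; likewise for the lower tails. With `c = √(log (1/ε))` the assumption on `ε`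
gives `c < N - 2 ≤ N + m`, so the tail of `X + Y` beyond `c` is at most `Φ(-c) + ε`, and the
Gaussian tail bound `Φ(-c) ≤ e^{-c²/2}/2 = √ε/2` finishes the estimate.
-/

open Real MeasureTheory Set ProbabilityTheory

noncomputable def stdGaussianDensity (t : ℝ) : ℝ :=
  (Real.sqrt (2 * Real.pi))⁻¹ * Real.exp (-t ^ 2 / 2)

noncomputable def stdNormalCDF (x : ℝ) : ℝ :=
  ∫ t in Set.Iic x, stdGaussianDensity t

lemma stdGaussianDensity_eq_gaussianPDFReal : stdGaussianDensity = gaussianPDFReal 0 1 := by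
  ext t
  simp [stdGaussianDensity, gaussianPDFReal]

lemma integrable_stdGaussianDensity : Integrable stdGaussianDensity := by
  rw [stdGaussianDensity_eq_gaussianPDFReal]
  exact integrable_gaussianPDFReal 0 1

lemma integral_stdGaussianDensity : ∫ t, stdGaussianDensity t = 1 := by
  rw [stdGaussianDensity_eq_gaussianPDFReal]
  exact integral_gaussianPDFReal_eq_one 0 one_ne_zero

lemma stdGaussianDensity_neg (t : ℝ) : stdGaussianDensity (-t) = stdGaussianDensity t := by
  simp [stdGaussianDensity]

lemma stdNormalCDF_neg (s : ℝ) : stdNormalCDF (-s) = 1 - stdNormalCDF s := by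
  have hsplit : stdNormalCDF s + ∫ t in Ioi s, stdGaussianDensity t = 1 := by
    rw [← integral_stdGaussianDensity, ← compl_Iic]
    exact integral_add_compl measurableSet_Iic integrable_stdGaussianDensity
  have hreflect : stdNormalCDF (-s) = ∫ t in Ioi s, stdGaussianDensity t := by
    rw [stdNormalCDF]
    simpa [stdGaussianDensity_neg] using integral_comp_neg_Iic (-s) stdGaussianDensity
  linarith

lemma stdNormalCDF_zero : stdNormalCDF 0 = 1 / 2 := by
  linarith [neg_zero (G := ℝ) ▸ stdNormalCDF_neg 0]

lemma setIntegral_Iic_comp_add_right {E : Type*} [NormedAddCommGroup E] [NormedSpace ℝ E]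
    (f : ℝ → E) (a s : ℝ) :
    ∫ t in Iic a, f (t + s) = ∫ t in Iic (a + s), f t := by
  have h := (measurePreserving_add_right volume s).setIntegral_preimage_emb
    (measurableEmbedding_addRight s) f (Iic (a + s))
  rwa [preimage_add_const_Iic, add_sub_cancel_right] at h

lemma stdGaussianDensity_le_exp_mul_add {s t : ℝ} (hs : 0 ≤ s) (ht : t ≤ -s) :
    stdGaussianDensity t ≤ exp (-s ^ 2 / 2) * stdGaussianDensity (t + s) := by
  rw [stdGaussianDensity, stdGaussianDensity, mul_left_comm, ← exp_add]
  gcongr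
  -- `t² - (t + s)² - s² = -2s(t + s) ≥ 0`
  nlinarith [mul_nonneg hs (neg_nonneg.mpr (show t + s ≤ 0 by linarith))]

lemma stdNormalCDF_neg_le_exp {s : ℝ} (hs : 0 ≤ s) :
    stdNormalCDF (-s) ≤ exp (-s ^ 2 / 2) / 2 := by
  calc stdNormalCDF (-s)
      ≤ ∫ t in Iic (-s), exp (-s ^ 2 / 2) * stdGaussianDensity (t + s) :=
        setIntegral_mono_on integrable_stdGaussianDensity.integrableOn
          ((integrable_stdGaussianDensity.comp_add_right s).const_mul _).integrableOn
          measurableSet_Iic fun t ht => stdGaussianDensity_le_exp_mul_add hs ht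
    _ = exp (-s ^ 2 / 2) / 2 := by
        rw [integral_const_mul, setIntegral_Iic_comp_add_right, neg_add_cancel,
          ← stdNormalCDF, stdNormalCDF_zero, mul_one_div]

lemma stdNormalCDF_neg_sqrt_log_inv_le {ε : ℝ} (hε0 : 0 < ε) (hε1 : ε ≤ 1) :
    stdNormalCDF (-√(log (1 / ε))) ≤ √ε / 2 := by
  have hL : 0 ≤ log (1 / ε) := log_nonneg (one_le_one_div hε0 hε1)
  have hexp : exp (-√(log (1 / ε)) ^ 2 / 2) = √ε := by
    rw [sq_sqrt hL, exp_half, one_div, log_inv, neg_neg, exp_log hε0]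
  simpa only [hexp] using stdNormalCDF_neg_le_exp (sqrt_nonneg (log (1 / ε)))

lemma measureReal_lt_le_stdNormalCDF_neg_add {Ω : Type*} [MeasurableSpace Ω] {μ : Measure Ω}
    [IsProbabilityMeasure μ] {Z : Ω → ℝ} (hZ : Measurable Z) {ε : ℝ}
    (hclose : ∀ x, |μ.real {ω | Z ω ≤ x} - stdNormalCDF x| ≤ ε) (s : ℝ) :
    μ.real {ω | s < Z ω} ≤ stdNormalCDF (-s) + ε := by
  have hcompl : {ω | s < Z ω} = {ω | Z ω ≤ s}ᶜ := by ext; simp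
  rw [hcompl, probReal_compl_eq_one_sub (measurableSet_le hZ measurable_const), stdNormalCDF_neg]
  linarith [(abs_le.mp (hclose s)).1]

lemma measureReal_le_abs_le {Ω : Type*} [MeasurableSpace Ω] (μ : Measure Ω) (Y : Ω → ℝ) (N : ℝ) :
    μ.real {ω | N ≤ |Y ω|} ≤ μ.real (Y ⁻¹' Ici N) + μ.real (Y ⁻¹' Iic (-N)) := by
  have hsplit : {ω | N ≤ |Y ω|} = Y ⁻¹' Ici N ∪ Y ⁻¹' Iic (-N) := by
    ext ω
    simp [le_abs', or_comm]
  rw [hsplit]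
  exact measureReal_union_le _ _

lemma ProbabilityTheory.IndepFun.measureReal_preimage_right_le_two_mul {Ω : Type*}
    [MeasurableSpace Ω] {μ : Measure Ω} [IsFiniteMeasure μ] {X Y : Ω → ℝ} (hXY : IndepFun X Y μ)
    {A B : Set ℝ} (hA : MeasurableSet A) (hB : MeasurableSet B) {S : Set Ω}
    (hS : X ⁻¹' A ∩ Y ⁻¹' B ⊆ S) (hX : 1 / 2 ≤ μ.real (X ⁻¹' A)) :
    μ.real (Y ⁻¹' B) ≤ 2 * μ.real S := by
  have hprod : μ.real (X ⁻¹' A) * μ.real (Y ⁻¹' B) ≤ μ.real S := by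
    rw [measureReal_def, measureReal_def, ← ENNReal.toReal_mul,
      ← hXY.measure_inter_preimage_eq_mul A B hA hB]
    exact measureReal_mono hS
  nlinarith [measureReal_nonneg (μ := μ) (s := Y ⁻¹' B)]

lemma three_add_two_mul_sqrt_two_lt_log_inv {ε : ℝ} (hε0 : 0 < ε)
    (hε : ε < exp (-(1 / (3 - 2 * √2)))) : 3 + 2 * √2 < log (1 / ε) := by
  have hsq : √2 ^ 2 = 2 := sq_sqrt zero_le_two
  have hinv : 1 / (3 - 2 * √2) = 3 + 2 * √2 := by
    rw [div_eq_iff (by nlinarith [sqrt_nonneg 2])]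
    nlinarith
  have := log_lt_log hε0 hε
  rw [log_exp, hinv] at this
  rw [one_div, log_inv]
  linarith

lemma sqrt_add_two_lt_one_add_sqrt_two_mul {L : ℝ} (hL : 3 + 2 * √2 < L) :
    √L + 2 < 1 + √(2 * L) := by
  have hsq : √2 ^ 2 = 2 := sq_sqrt zero_le_two
  have h2 : 1 < √2 := by nlinarith [sqrt_nonneg 2]
  -- `3 + 2√2 = (1 + √2)²`
  have hc : 1 + √2 < √L := (lt_sqrt (by positivity)).mpr (by nlinarith)
  rw [sqrt_mul zero_le_two]
  nlinarith

theorem stmt_3 {Ω : Type*} [MeasurableSpace Ω] (μ : Measure Ω) [IsProbabilityMeasure μ]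
    (X Y : Ω → ℝ) (hXm : Measurable X) (hYm : Measurable Y)
    (hindep : IndepFun X Y μ)
    (ε : ℝ) (hε0 : 0 < ε)
    (hε : ε < min (1 / 4 - stdNormalCDF (-1)) (Real.exp (-(1 / (3 - 2 * Real.sqrt 2)))))
    (hclose : ∀ x : ℝ, |(μ {ω | X ω + Y ω ≤ x}).toReal - stdNormalCDF x| ≤ ε)
    (m : ℝ) (hm1 : (1 : ℝ) / 2 ≤ (μ {ω | X ω ≤ m}).toReal)
    (hm2 : (1 : ℝ) / 2 ≤ (μ {ω | m ≤ X ω}).toReal) (hmabs : |m| ≤ 2) :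
    (μ {ω | 1 + Real.sqrt (2 * Real.log (1 / ε)) ≤ |Y ω|}).toReal ≤ 6 * Real.sqrt ε := by
  have hL := three_add_two_mul_sqrt_two_lt_log_inv hε0 (hε.trans_le (min_le_right _ _))
  have hε1 : ε ≤ 1 :=
    ((one_lt_div hε0).mp ((log_pos_iff (by positivity)).mp (by linarith [sqrt_nonneg 2]))).le
  set c := √(log (1 / ε))
  set N := 1 + √(2 * log (1 / ε))
  have hcN : c + 2 < N := sqrt_add_two_lt_one_add_sqrt_two_mul hL
  have hm := abs_le.mp hmabs
  have htail := stdNormalCDF_neg_sqrt_log_inv_le hε0 hε1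
  have hupper : μ.real (Y ⁻¹' Ici N) ≤ 2 * μ.real {ω | c < X ω + Y ω} :=
    hindep.measureReal_preimage_right_le_two_mul measurableSet_Ici measurableSet_Ici
      (fun ω ⟨(hx : m ≤ X ω), (hy : N ≤ Y ω)⟩ => show c < X ω + Y ω by linarith) hm2
  have hlower : μ.real (Y ⁻¹' Iic (-N)) ≤ 2 * μ.real {ω | X ω + Y ω ≤ -c} :=
    hindep.measureReal_preimage_right_le_two_mul measurableSet_Iic measurableSet_Iic
      (fun ω ⟨(hx : X ω ≤ m), (hy : Y ω ≤ -N)⟩ => show X ω + Y ω ≤ -c by linarith) hm1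
  have hsum_upper : μ.real {ω | c < X ω + Y ω} ≤ stdNormalCDF (-c) + ε :=
    measureReal_lt_le_stdNormalCDF_neg_add (Z := fun ω => X ω + Y ω) (hXm.add hYm) hclose c
  have hsum_lower : μ.real {ω | X ω + Y ω ≤ -c} ≤ stdNormalCDF (-c) + ε :=
    sub_le_iff_le_add'.mp (abs_le.mp (hclose (-c))).2
  have hεsqrt : ε ≤ √ε := by
    nlinarith [sq_sqrt hε0.le, sqrt_le_one.mpr hε1, sqrt_nonneg ε]
  calc μ.real {ω | N ≤ |Y ω|} ≤ μ.real (Y ⁻¹' Ici N) + μ.real (Y ⁻¹' Iic (-N)) :=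
        measureReal_le_abs_le μ Y N
    _ ≤ 6 * √ε := by linarith
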